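/- Let C be an alphabet and l ≥ 0. Applying ∂_{t-1} to the polynomial e_{l+t}(C - x_t - x_{t+1} - ... - x_b) := Σ_{j=0}^{l+t} (-1)^j e_{l+t-j}(C) h_j(x_t,...,x_b) yields e_{l+t-1}(C - x_{t-1} - x_t - ... - x_b), where the e_i(C) are treated as constants (scalars). -/

import Mathlib

/-! In the generating-function picture, `e_N(C - A)` is the coefficient of `t^N` in
`E_C(t) · Π_{a ∈ A} 1/(1 + a t)`. The transposition `s_{t-1}` only changes the factor
`1/(1 + x_t t)` into `1/(1 + x_{t-1} t)`, and
`1/(1 + x_t t) - 1/(1 + x_{t-1} t) = (x_{t-1} - x_t) · t / ((1 + x_{t-1} t)(1 + x_t t))`.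
Reading off the coefficient of `t^{N+1}` gives `(x_{t-1} - x_t)` times `e_N(C - x_{t-1} - ⋯ - x_b)`,
and `x_{t-1} - x_t` can be cancelled in the domain `R12`. -/

open PowerSeries

variable {R : Type*} [CommRing R]

/-- The geometric series `Σ xⁿ tⁿ`, i.e. the formal power series `1/(1 - x·t)`:
it is the (unique) inverse of `1 - x·t` in `R⟦t⟧`. -/
noncomputable def geomInv (x : R) : PowerSeries R := PowerSeries.mk fun n => x ^ n

/-- The generating function `E_A(t) = Π_{x ∈ A} (1 + x·t)` of the elementary symmetric
functions of an alphabet `A` (a finite multiset). -/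
noncomputable def eGen (A : Multiset R) : PowerSeries R :=
  (A.map fun x => 1 + PowerSeries.C x * PowerSeries.X).prod

/-- The generating function `H_A(t) = Π_{x ∈ A} 1/(1 - x·t)` of the complete homogeneous
symmetric functions of an alphabet `A`. -/
noncomputable def hGen (A : Multiset R) : PowerSeries R :=
  (A.map fun x => geomInv x).prod

/-- `e_i(A)`: the `i`-th elementary symmetric function of the alphabet `A`. -/
noncomputable def eA (A : Multiset R) (i : ℕ) : R := PowerSeries.coeff i (eGen A)

/-- `h_i(A)`: the `i`-th complete homogeneous symmetric function of the alphabet `A`. -/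
noncomputable def hA (A : Multiset R) (i : ℕ) : R := PowerSeries.coeff i (hGen A)

/-- `e_i(A - B)`, defined by the generating function
`Π_{x ∈ A} (1 + x·t) · Π_{y ∈ B} 1/(1 + y·t)`. -/
noncomputable def eDiff (A B : Multiset R) (i : ℕ) : R :=
  PowerSeries.coeff i (eGen A * (B.map fun y => geomInv (-y)).prod)

/-- `h_i(A - B)`, defined by the generating function
`Π_{x ∈ A} 1/(1 - x·t) · Π_{y ∈ B} (1 - y·t)`. -/
noncomputable def hDiff (A B : Multiset R) (i : ℕ) : R :=
  PowerSeries.coeff i (hGen A * (B.map fun y => 1 - PowerSeries.C y * PowerSeries.X).prod)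

open MvPolynomial

/-- The ambient ring `ℤ[c_1, c_2, …][x_1, x_2, …]`: the variable `Sum.inl i` is the
scalar `c_i = e_i(C)`, and `Sum.inr m` is the variable `x_m`. -/
abbrev R12 : Type := MvPolynomial (ℕ ⊕ ℕ) ℤ

/-- `e_i(C)`: treated as a constant, with `e_0(C) = 1`. -/
noncomputable def cval (i : ℕ) : R12 := if i = 0 then 1 else X (Sum.inl i)

/-- The multiset of variables `x_t, …, x_b`. -/
noncomputable def xs (t b : ℕ) : Multiset R12 :=
  (Finset.Icc t b).val.map fun m => (X (Sum.inr m) : R12)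

/-- `e_N(C - x_t - ⋯ - x_b) := Σ_{j=0}^N (-1)^j e_{N-j}(C) h_j(x_t, …, x_b)`. -/
noncomputable def eCminus (b t N : ℕ) : R12 :=
  ∑ j ∈ Finset.range (N + 1), (-1 : R12) ^ j * cval (N - j) * hA (xs t b) j

/-- `D` is the divided difference operator `∂_{t-1}` (swapping `x_{t-1}` and `x_t`),
characterized by `(x_{t-1} - x_t) * D P = P - s_{t-1} P`; the constants `c_i` are fixed
by the transposition. -/
def IsDividedDiffX (i : ℕ) (D : R12 → R12) : Prop :=
  ∀ P : R12, (X (Sum.inr i) - X (Sum.inr (i + 1))) * D P =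
    P - rename ⇑(Equiv.swap (Sum.inr i : ℕ ⊕ ℕ) (Sum.inr (i + 1))) P

lemma one_add_C_mul_X_mul_geomInv_neg (x : R) :
    (1 + PowerSeries.C x * PowerSeries.X) * geomInv (-x) = 1 := by
  ext (_ | n)
  · simp [geomInv]
  · rw [add_mul, one_mul, map_add, mul_assoc, PowerSeries.coeff_C_mul,
      PowerSeries.coeff_succ_X_mul]
    simp only [geomInv, PowerSeries.coeff_mk, pow_succ, mul_neg, PowerSeries.coeff_one,
      Nat.add_eq_zero_iff, one_ne_zero, and_false, ↓reduceIte]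
    ring

lemma geomInv_neg_sub_geomInv_neg (y z : R) :
    geomInv (-z) - geomInv (-y) =
      PowerSeries.C (y - z) * PowerSeries.X * (geomInv (-y) * geomInv (-z)) := by
  rw [map_sub]
  linear_combination geomInv (-y) * one_add_C_mul_X_mul_geomInv_neg z -
    geomInv (-z) * one_add_C_mul_X_mul_geomInv_neg y

lemma coeff_succ_mul_geomInv_neg_sub (F : PowerSeries R) (y z : R) (N : ℕ) :
    PowerSeries.coeff (N + 1) (F * geomInv (-z)) - PowerSeries.coeff (N + 1) (F * geomInv (-y)) =
      (y - z) * PowerSeries.coeff N (F * geomInv (-y) * geomInv (-z)) := by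
  rw [← map_sub, ← mul_sub, geomInv_neg_sub_geomInv_neg, mul_comm, mul_assoc, mul_assoc,
    PowerSeries.coeff_C_mul, PowerSeries.coeff_succ_X_mul]
  congr 2
  ring

lemma map_geomInv {S : Type*} [CommRing S] (φ : R →+* S) (x : R) :
    PowerSeries.map φ (geomInv x) = geomInv (φ x) := by
  ext n
  simp [geomInv]

lemma prod_geomInv_neg (A : Multiset R) :
    (A.map fun x => geomInv (-x)).prod = PowerSeries.rescale (-1) (hGen A) := by
  rw [hGen, map_multiset_prod, Multiset.map_map]
  congr 1
  refine Multiset.map_congr rfl fun x _ => ?_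
  ext n
  simp [geomInv, neg_pow x]

lemma coeff_mul_prod_geomInv_neg (F : PowerSeries R) (A : Multiset R) (N : ℕ) :
    PowerSeries.coeff N (F * (A.map fun x => geomInv (-x)).prod) =
      ∑ j ∈ Finset.range (N + 1), (-1) ^ j * PowerSeries.coeff (N - j) F * hA A j := by
  rw [mul_comm, PowerSeries.coeff_mul, Finset.Nat.sum_antidiagonal_eq_sum_range_succ
    (fun i j => PowerSeries.coeff i _ * PowerSeries.coeff j F)]
  refine Finset.sum_congr rfl fun j _ => ?_
  rw [prod_geomInv_neg, PowerSeries.coeff_rescale, hA]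
  ring

noncomputable def cGen : PowerSeries R12 := PowerSeries.mk cval

noncomputable def eCminusGen (b t : ℕ) : PowerSeries R12 :=
  cGen * ((xs t b).map fun x => geomInv (-x)).prod

lemma eCminus_eq_coeff (b t N : ℕ) : eCminus b t N = PowerSeries.coeff N (eCminusGen b t) := by
  simp [eCminusGen, coeff_mul_prod_geomInv_neg, eCminus, cGen]

lemma xs_eq_cons {t b : ℕ} (h : t ≤ b) : xs t b = X (Sum.inr t) ::ₘ xs (t + 1) b := by
  rw [xs, xs, Finset.Icc_eq_cons_Ioc h, Finset.Icc_add_one_left_eq_Ioc, Finset.cons_val,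
    Multiset.map_cons]

lemma eCminusGen_eq_mul {t b : ℕ} (h : t ≤ b) :
    eCminusGen b t = eCminusGen b (t + 1) * geomInv (-X (Sum.inr t)) := by
  rw [eCminusGen, eCminusGen, xs_eq_cons h, Multiset.map_cons, Multiset.prod_cons]
  ring

lemma map_rename_eCminusGen {f : ℕ ⊕ ℕ → ℕ ⊕ ℕ} {t b : ℕ} (hc : ∀ i, f (Sum.inl i) = Sum.inl i)
    (hx : ∀ m, t ≤ m → m ≤ b → f (Sum.inr m) = Sum.inr m) :
    PowerSeries.map (rename (R := ℤ) f : R12 →+* R12) (eCminusGen b t) = eCminusGen b t := by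
  have hcGen : PowerSeries.map (rename (R := ℤ) f : R12 →+* R12) cGen = cGen := by
    ext n
    by_cases hn : n = 0 <;> simp [cGen, cval, hn, hc]
  rw [eCminusGen, map_mul, hcGen, map_multiset_prod, xs, Multiset.map_map, Multiset.map_map,
    Multiset.map_map]
  congr 2
  refine Multiset.map_congr rfl fun m hm => ?_
  rw [Finset.mem_val, Finset.mem_Icc] at hm
  simp [map_geomInv, hx m hm.1 hm.2]

lemma eCminus_sub_rename_swap {s b : ℕ} (h : s + 1 ≤ b) (N : ℕ) :
    eCminus b (s + 1) (N + 1) -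
        rename (Equiv.swap (Sum.inr s) (Sum.inr (s + 1))) (eCminus b (s + 1) (N + 1)) =
      (X (Sum.inr s) - X (Sum.inr (s + 1))) * eCminus b s N := by
  set σ := Equiv.swap (Sum.inr s : ℕ ⊕ ℕ) (Sum.inr (s + 1))
  set G := eCminusGen b (s + 2)
  have hG : PowerSeries.map (rename (R := ℤ) σ : R12 →+* R12) G = G :=
    map_rename_eCminusGen (fun i => Equiv.swap_apply_of_ne_of_ne (by simp) (by simp))
      fun m hm _ => Equiv.swap_apply_of_ne_of_ne (by simp; omega) (by simp; omega)
  have hP : eCminus b (s + 1) (N + 1) =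
      PowerSeries.coeff (N + 1) (G * geomInv (-X (Sum.inr (s + 1)))) := by
    rw [eCminus_eq_coeff, eCminusGen_eq_mul h]
  have hsP : rename σ (eCminus b (s + 1) (N + 1)) =
      PowerSeries.coeff (N + 1) (G * geomInv (-X (Sum.inr s))) := by
    rw [hP, ← AlgHom.coe_toRingHom, ← PowerSeries.coeff_map, map_mul, hG, map_geomInv]
    simp [σ]
  have hQ : eCminus b s N =
      PowerSeries.coeff N (G * geomInv (-X (Sum.inr s)) * geomInv (-X (Sum.inr (s + 1)))) := by
    rw [eCminus_eq_coeff, eCminusGen_eq_mul (by omega), eCminusGen_eq_mul h, mul_right_comm]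
  rw [hsP, hP, hQ, coeff_succ_mul_geomInv_neg_sub]

/-- Applying `∂_{t-1}` to `e_{l+t}(C - x_t - ⋯ - x_b)` yields
`e_{l+t-1}(C - x_{t-1} - ⋯ - x_b)`. -/
theorem divided_diff_eCminus (b t l : ℕ) (ht : 2 ≤ t) (htb : t ≤ b)
    (D : R12 → R12) (hD : IsDividedDiffX (t - 1) D) :
    D (eCminus b t (l + t)) = eCminus b (t - 1) (l + t - 1) := by
  obtain ⟨s, rfl⟩ : ∃ s, t = s + 1 := ⟨t - 1, by omega⟩
  have hne : (X (Sum.inr s) - X (Sum.inr (s + 1)) : R12) ≠ 0 :=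
    sub_ne_zero.2 fun h => by simpa using X_injective h
  have hDP := hD (eCminus b (s + 1) (l + s + 1))
  rw [Nat.add_sub_cancel, eCminus_sub_rename_swap htb] at hDP
  rw [← add_assoc, Nat.add_sub_cancel, Nat.add_sub_cancel]
  exact mul_left_cancel₀ hne hDP
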